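/- In the Galkin quandle G(A, c) (with τ(0)=τ(1)=0, τ(2)=c), the right translation f by (0,0), given by f(x,a) = (-x, -a + τ(x)), satisfies: f(0,a) has cycle length 1 or 2 (length 1 iff 2a=0), and for a ∈ A, the element (1,a) lies in a cycle of f of length 2k where k is the order of c in A; specifically f^{2k}(1,a) = (1, a + k·c) and f^{2k}(2,a) = (2, a - k·c) for all k > 0. -/
import Mathlib


/-- The function `μ` with `μ(0) = 2`, `μ(1) = μ(2) = -1`. -/
def galkinMu : ZMod 3 → ℤ := fun x => if x = 0 then 2 else -1

/-- The function `τ` with `τ(0) = 0`, `τ(1) = c₁`, `τ(2) = c₂`. -/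
def galkinTau {A : Type*} [AddCommGroup A] (c₁ c₂ : A) : ZMod 3 → A :=
  fun x => if x = 1 then c₁ else if x = 2 then c₂ else 0

/-- The Galkin quandle operation on `ZMod 3 × A` for the quandle `G(A, c₁, c₂)`. -/
def galkinOp {A : Type*} [AddCommGroup A] (c₁ c₂ : A) (p q : ZMod 3 × A) : ZMod 3 × A :=
  (2 * q.1 - p.1, -p.2 + galkinMu (p.1 - q.1) • q.2 + galkinTau c₁ c₂ (p.1 - q.1))

/-- Right translation by `(0,0)` in the Galkin quandle `G(A,c)`. -/
def galkinF {A : Type*} [AddCommGroup A] (c : A) : ZMod 3 × A → ZMod 3 × A :=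
  fun z => galkinOp 0 c z (0, 0)

section aux
variable {A : Type*} [AddCommGroup A] (c : A)

lemma galkinF0 (a : A) : galkinF c (0, a) = (0, -a) := by
  simp [galkinF, galkinOp, galkinMu, galkinTau]
  intro h; exact absurd h (by decide)

lemma galkinF1 (a : A) : galkinF c (1, a) = (2, -a) := by
  simp [galkinF, galkinOp, galkinMu, galkinTau]
  decide

lemma galkinF2 (a : A) : galkinF c (2, a) = (1, -a + c) := by
  simp [galkinF, galkinOp, galkinMu, galkinTau]
  exact ⟨by decide, fun h => absurd h (by decide)⟩

lemma galkinF_even (a : A) (m : ℕ) :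
    (galkinF c)^[2 * m] (1, a) = (1, a + m • c) ∧
    (galkinF c)^[2 * m] (2, a) = (2, a - m • c) := by
  induction m generalizing a with
  | zero => simp
  | succ n ih =>
    have h1 : (galkinF c)^[2 * (n + 1)] (1, a)
        = (galkinF c)^[2 * n] (galkinF c (galkinF c (1, a))) := by
      rw [show 2 * (n + 1) = 2 * n + 2 by ring]
      rw [Function.iterate_add_apply]
      rfl
    have h2 : (galkinF c)^[2 * (n + 1)] (2, a)
        = (galkinF c)^[2 * n] (galkinF c (galkinF c (2, a))) := by
      rw [show 2 * (n + 1) = 2 * n + 2 by ring]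
      rw [Function.iterate_add_apply]
      rfl
    constructor
    · rw [h1, galkinF1, galkinF2, (ih _).1]
      congr 1
      simp [add_smul]
      abel
    · rw [h2, galkinF2, galkinF1, (ih _).2]
      congr 1
      simp [add_smul]
      abel

lemma galkinF_odd (a : A) (m : ℕ) :
    ((galkinF c)^[2 * m + 1] (1, a)).1 = 2 := by
  rw [Function.iterate_succ_apply', (galkinF_even c a m).1, galkinF1]

end aux

theorem stmt_6 {A : Type*} [AddCommGroup A] (c : A) (k : ℕ)
    (hk : addOrderOf c = k) (hkpos : 0 < k) :
    (∀ a : A, galkinF c (galkinF c (0, a)) = (0, a)) ∧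
    (∀ a : A, galkinF c (0, a) = (0, a) ↔ (2 : ℤ) • a = 0) ∧
    (∀ (a : A) (m : ℕ), 0 < m →
      (galkinF c)^[2 * m] (1, a) = (1, a + m • c) ∧
      (galkinF c)^[2 * m] (2, a) = (2, a - m • c)) ∧
    (∀ a : A,
      (galkinF c)^[2 * k] (1, a) = (1, a) ∧
      ∀ m : ℕ, 0 < m → m < 2 * k → (galkinF c)^[m] (1, a) ≠ (1, a)) := by
  refine ⟨fun a => by rw [galkinF0, galkinF0, neg_neg],
    fun a => ?_, fun a m _ => galkinF_even c a m, fun a => ⟨?_, ?_⟩⟩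
  · rw [galkinF0]
    constructor
    · intro h
      have := (Prod.mk.injEq _ _ _ _).mp h
      have h2 := this.2
      rw [two_zsmul]
      exact neg_eq_iff_add_eq_zero.mp h2
    · intro h
      have h2 : a + a = 0 := by rw [two_zsmul] at h; exact h
      have : -a = a := by
        rw [eq_comm, eq_neg_iff_add_eq_zero, h2]
      rw [this]
  · rw [(galkinF_even c a k).1, ← hk, addOrderOf_nsmul_eq_zero, add_zero]
  · intro m hm hmk heq
    rcases Nat.even_or_odd m with ⟨j, hj⟩ | ⟨j, hj⟩
    · subst hj
      rw [show j + j = 2 * j by ring, (galkinF_even c a j).1] at heq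
      have hj0 : j • c = 0 := by
        have := (Prod.mk.injEq _ _ _ _).mp heq
        have h2 := this.2
        rwa [add_eq_left] at h2
      have hdvd : k ∣ j := by
        rw [← hk]; exact addOrderOf_dvd_of_nsmul_eq_zero hj0
      have hjpos : 0 < j := by omega
      have := Nat.le_of_dvd hjpos hdvd
      omega
    · subst hj
      have := galkinF_odd c a j
      rw [heq] at this
      have h12 : (1 : ZMod 3) = 2 := this
      exact absurd h12 (by decide)
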